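/- arXiv:2106.15985 — 2 statements merged into one kernel-verified Lean document; each statement's English description precedes it below -/
import Mathlib

section
/- Let f : ℍ → ℂ be holomorphic on the complex upper half-plane, suppose f((aτ+b)/(cτ+d)) = (cτ+d)² · f(τ) for every matrix [[a,b],[c,d]] ∈ SL_2(ℤ) and every τ ∈ ℍ, and suppose f has a Fourier expansion f(τ) = Σ_{n ≥ −N} a_n e^{2πinτ} valid for all τ ∈ ℍ, for some N ∈ ℕ and coefficients a_n ∈ ℂ (so f is a nearly-holomorphic, i.e. weakly holomorphic, modular form of weight 2 and level one). Then the constant term vanishes: a_0 = 0. -/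
noncomputable section

open Matrix Complex

/-- 2×2 complex matrices. -/
abbrev Mat2 : Type := Matrix (Fin 2) (Fin 2) ℂ
/-- 4×4 complex matrices. -/
abbrev Mat4 : Type := Matrix (Fin 4) (Fin 4) ℂ

/-- The Hermitian upper half-space of degree two:
`z` such that `(z - z*)/(2i)` is positive definite. -/
def HermHalf : Set Mat2 :=
  {z | (((2 : ℂ) * Complex.I)⁻¹ • (z - z.conjTranspose)).IsHermitian ∧
    ∀ v : Fin 2 → ℂ, v ≠ 0 →
      0 < (dotProduct (star v)
        ((((2 : ℂ) * Complex.I)⁻¹ • (z - z.conjTranspose)).mulVec v)).re}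

/-- The 2×2 block of a 4×4 matrix in block position `(r, s)`. -/
def blk (M : Mat4) (r s : Fin 2) : Mat2 :=
  Matrix.of fun i j =>
    M ⟨2 * r.val + i.val, by have := r.isLt; have := i.isLt; omega⟩
      ⟨2 * s.val + j.val, by have := s.isLt; have := j.isLt; omega⟩

/-- Möbius action of a 4×4 block matrix `[[a,b],[c,d]]` on `H2`:
`z ↦ (az+b)(cz+d)⁻¹`. -/
def moeb (M : Mat4) (z : Mat2) : Mat2 :=
  (blk M 0 0 * z + blk M 0 1) * (blk M 1 0 * z + blk M 1 1)⁻¹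

/-- The matrix 𝐉 = [[0, -I₂],[I₂, 0]]. -/
def Jmat : Mat4 :=
  !![0, 0, -1, 0; 0, 0, 0, -1; 1, 0, 0, 0; 0, 1, 0, 0]

/-- The defining relation `Mᵀ 𝐉 M̄ = 𝐉` of the unitary similitude group. -/
def IsUnitaryRel (M : Mat4) : Prop :=
  Mᵀ * Jmat * M.map (starRingEnd ℂ) = Jmat

/-- The involution σ swapping the diagonal entries τ and w. -/
def swapM (z : Mat2) : Mat2 :=
  !![z 1 1, z 0 1; z 1 0, z 0 0]

/-- Holomorphy of a function of a 2×2 complex matrix variable on a set `U`. -/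
def HoloOn (f : Mat2 → ℂ) (U : Set Mat2) : Prop :=
  DifferentiableOn ℂ (fun x : Fin 2 → Fin 2 → ℂ => f (Matrix.of x))
    ((fun x : Fin 2 → Fin 2 → ℂ => Matrix.of x) ⁻¹' U)

/-- Membership in the ring of integers `O_K` of a subfield `K ⊆ ℂ`. -/
def InOK (K : IntermediateField ℚ ℂ) (x : ℂ) : Prop :=
  x ∈ K ∧ IsIntegral ℤ x

/-- The group `SU_{2,2}(O_K)`: entries in `O_K`, determinant 1, `Mᵀ 𝐉 M̄ = 𝐉`. -/
def SU22 (K : IntermediateField ℚ ℂ) : Set Mat4 :=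
  {M | (∀ i j, InOK K (M i j)) ∧ M.det = 1 ∧ IsUnitaryRel M}

/-- The Siegel upper half-space of degree two: symmetric matrices in `H2`. -/
def Siegel : Set Mat2 := {z | z ∈ HermHalf ∧ zᵀ = z}

/-- The union of all `Γ`-translates of the Siegel upper half-space. -/
def SiegelOrbit (Γ : Set Mat4) : Set Mat2 :=
  {w | ∃ γ ∈ Γ, ∃ z ∈ Siegel, w = moeb γ z}

/-- Conditions (i) (local quotient of holomorphic functions with poles only on `H`)
and (ii) (weight `k` transformation under `Γ`) for a meromorphic modular form
regarded as a function on `H2 ∖ H`. -/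
def FormCore (Γ : Set Mat4) (H : Set Mat2) (k : ℤ) (f : Mat2 → ℂ) : Prop :=
  (∀ z ∈ HermHalf, ∃ U : Set Mat2, IsOpen U ∧ z ∈ U ∧ U ⊆ HermHalf ∧
    ∃ g h : Mat2 → ℂ, HoloOn g U ∧ HoloOn h U ∧
      (∀ w ∈ U \ H, h w ≠ 0) ∧ (∀ w ∈ U \ H, f w = g w / h w)) ∧
  (∀ γ ∈ Γ, ∀ z ∈ HermHalf \ H,
    f (moeb γ z) = (blk γ 1 0 * z + blk γ 1 1).det ^ k * f z)

/-- A symmetric meromorphic Hermitian modular form of weight `k` with poles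
supported on `H`. -/
def IsMeroFormPred (Γ : Set Mat4) (H : Set Mat2) (k : ℤ) (f : Mat2 → ℂ) : Prop :=
  FormCore Γ H k f ∧ ∀ z ∈ HermHalf \ H, f (swapM z) = f z

/-- A skew-symmetric meromorphic Hermitian modular form of weight `k` with poles
supported on `H`. -/
def IsSkewFormPred (Γ : Set Mat4) (H : Set Mat2) (k : ℤ) (f : Mat2 → ℂ) : Prop :=
  FormCore Γ H k f ∧ ∀ z ∈ HermHalf \ H, f (swapM z) = - f z

/-- `M_*^!(H)` is freely generated by forms of weights `w 0, …, w 4`. -/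
def FreelyGeneratedBy (Γ : Set Mat4) (H : Set Mat2) (w : Fin 5 → ℤ) : Prop :=
  ∃ f : Fin 5 → Mat2 → ℂ,
    (∀ i, IsMeroFormPred Γ H (w i) (f i)) ∧
    (∀ P : MvPolynomial (Fin 5) ℂ,
      (∀ z ∈ HermHalf \ H, MvPolynomial.eval (fun i => f i z) P = 0) → P = 0) ∧
    (∀ k : ℤ, ∀ g, IsMeroFormPred Γ H k g →
      ∃ P : MvPolynomial (Fin 5) ℂ,
        ∀ z ∈ HermHalf \ H, g z = MvPolynomial.eval (fun i => f i z) P)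

/-- Membership in the dual lattice `O_K^#`: `x ∈ K` such that
`Tr_{K/ℚ}(x·y) = x·y + conj(x·y) ∈ ℤ` for all `y ∈ O_K`. -/
def InOKdual (K : IntermediateField ℚ ℂ) (x : ℂ) : Prop :=
  x ∈ K ∧ ∀ y : ℂ, InOK K y → ∃ n : ℤ, x * y + (starRingEnd ℂ) (x * y) = (n : ℂ)

/-- `Λ_K`: 2×2 Hermitian matrices with entries in `O_K^#`. -/
def InLambda (K : IntermediateField ℚ ℂ) (B : Mat2) : Prop :=
  B.conjTranspose = B ∧ ∀ i j, InOKdual K (B i j)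

/-- The rational quadratic divisor `Δ_{a,B,c} = {z ∈ H2 : a·det z + tr(Bz) + c = 0}`. -/
def Delta (a c : ℤ) (B : Mat2) : Set Mat2 :=
  {z | z ∈ HermHalf ∧ (a : ℂ) * z.det + (B * z).trace + (c : ℂ) = 0}

/-- The discriminant `ac - det B` of `Δ_{a,B,c}`. -/
def discOf (a c : ℤ) (B : Mat2) : ℂ := (a : ℂ) * (c : ℂ) - B.det

/-- The union of all rational quadratic divisors with discriminant in `S`. -/
def HeegnerUnion (K : IntermediateField ℚ ℂ) (S : Set ℂ) : Set Mat2 :=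
  {z | ∃ a c : ℤ, ∃ B : Mat2, InLambda K B ∧ discOf a c B ∈ S ∧ z ∈ Delta a c B}

/-- `D(1)`: the union of all `Δ_{a,B,c}` of discriminant `1/n²`, `n ≥ 1`. -/
def Done (K : IntermediateField ℚ ℂ) : Set Mat2 :=
  HeegnerUnion K {x | ∃ n : ℕ, 0 < n ∧ x = 1 / ((n : ℂ) ^ 2)}

/-- Partial derivative of `f` with respect to the matrix entry `(i, j)`. -/
def pder (i j : Fin 2) (f : Mat2 → ℂ) (z : Mat2) : ℂ :=
  deriv (fun t : ℂ => f (z + t • Matrix.single i j (1 : ℂ))) 0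

/-- The Rankin–Cohen–Ibukiyama bracket of five functions on `H2` of weights
`k 0, …, k 4`. -/
def RCIB (k : Fin 5 → ℤ) (f : Fin 5 → Mat2 → ℂ) (z : Mat2) : ℂ :=
  (Matrix.of ![
    (fun s => (k s : ℂ) * f s z),
    (fun s => pder 0 0 (f s) z),
    (fun s => pder 0 1 (f s) z),
    (fun s => pder 1 0 (f s) z),
    (fun s => pder 1 1 (f s) z)]).det

/-- The imaginary quadratic field `ℚ(√-d) ⊆ ℂ`. -/
def Ksqrt (d : ℕ) : IntermediateField ℚ ℂ :=
  IntermediateField.adjoin ℚ {Complex.I * (Real.sqrt d : ℂ)}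

/-!
The termwise primitive `F(z) = a₀ z + ∑_{n ≠ 0} aₙ e^{2πinz} / (2πin)` satisfies `F' = f` on the
upper half-plane. Weight two makes `f(-1/z) d(-1/z) = f(z) dz`, so `F(-1/z) - F(z)` is constant, and
it vanishes at `z = i`. At `ρ = e^{2πi/3}` we have `-1/ρ = ρ + 1`, hence `F(ρ + 1) = F(ρ)`; but the
exponentials are `1`-periodic, so `F(ρ + 1) = F(ρ) + a₀`.
-/

open scoped Real

lemma Real.exp_mul_le_exp_mul_add_exp_mul {t a b y : ℝ} (ha : a ≤ y) (hb : y ≤ b) :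
    Real.exp (t * y) ≤ Real.exp (t * a) + Real.exp (t * b) := by
  rcases le_total 0 t with ht | ht
  · exact (Real.exp_le_exp.2 (mul_le_mul_of_nonneg_left hb ht)).trans
      (le_add_of_nonneg_left (Real.exp_pos _).le)
  · exact (Real.exp_le_exp.2 (mul_le_mul_of_nonpos_left ha ht)).trans
      (le_add_of_nonneg_right (Real.exp_pos _).le)

lemma norm_mul_cexp_two_pi_I_mul (c : ℂ) (n : ℤ) (z : ℂ) :
    ‖c * cexp (2 * π * I * n * z)‖ = ‖c‖ * Real.exp (-(2 * π * n) * z.im) := by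
  rw [norm_mul, Complex.norm_exp]
  congr 2
  simp [Complex.mul_re, Complex.mul_im]

lemma norm_mul_cexp_two_pi_I_mul_le {c : ℂ} (n : ℤ) {a b z : ℂ} (ha : a.im ≤ z.im)
    (hb : z.im ≤ b.im) :
    ‖c * cexp (2 * π * I * n * z)‖ ≤
      ‖c * cexp (2 * π * I * n * a)‖ + ‖c * cexp (2 * π * I * n * b)‖ := by
  simp only [norm_mul_cexp_two_pi_I_mul, ← mul_add]
  exact mul_le_mul_of_nonneg_left (Real.exp_mul_le_exp_mul_add_exp_mul ha hb) (norm_nonneg c)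

lemma one_le_norm_two_pi_I_mul_intCast {n : ℤ} (hn : n ≠ 0) : 1 ≤ ‖2 * π * I * (n : ℂ)‖ := by
  have h1 : (1 : ℝ) ≤ |(n : ℝ)| := by exact_mod_cast Int.one_le_abs hn
  simp only [norm_mul, Complex.norm_two, Complex.norm_I, Complex.norm_real, Real.norm_eq_abs,
    Complex.norm_intCast, abs_of_pos Real.pi_pos, mul_one]
  nlinarith [Real.pi_gt_three]

lemma cexp_two_pi_I_mul_intCast_mul_add_one (n : ℤ) (z : ℂ) :
    cexp (2 * π * I * n * (z + 1)) = cexp (2 * π * I * n * z) := by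
  rw [mul_add, mul_one, Complex.exp_add, show (2 * π * I * n : ℂ) = n * (2 * π * I) by ring,
    Complex.exp_int_mul_two_pi_mul_I, mul_one]

section FourierPrimitive

variable (coef : ℤ → ℂ)

def fourierPrimitiveTerm (n : ℤ) (z : ℂ) : ℂ :=
  if n = 0 then coef 0 * z else coef n / (2 * π * I * n) * cexp (2 * π * I * n * z)

def fourierPrimitive (z : ℂ) : ℂ := ∑' n, fourierPrimitiveTerm coef n z

lemma hasDerivAt_fourierPrimitiveTerm (n : ℤ) (z : ℂ) :
    HasDerivAt (fourierPrimitiveTerm coef n) (coef n * cexp (2 * π * I * n * z)) z := by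
  rcases eq_or_ne n 0 with rfl | hn
  · have h : fourierPrimitiveTerm coef 0 = fun z ↦ coef 0 * z := funext fun z ↦ if_pos rfl
    rw [h]
    exact ((hasDerivAt_id' z).const_mul (coef 0)).congr_deriv (by simp)
  · have hc : (2 * π * I * n : ℂ) ≠ 0 := by simp [Real.pi_ne_zero, hn]
    have h : fourierPrimitiveTerm coef n =
        fun z ↦ coef n / (2 * π * I * n) * cexp (2 * π * I * n * z) :=
      funext fun z ↦ if_neg hn
    rw [h]
    exact (((hasDerivAt_id' z).const_mul _).cexp.const_mul _).congr_deriv (by field_simp)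

lemma norm_fourierPrimitiveTerm_le {n : ℤ} (hn : n ≠ 0) (z : ℂ) :
    ‖fourierPrimitiveTerm coef n z‖ ≤ ‖coef n * cexp (2 * π * I * n * z)‖ := by
  rw [fourierPrimitiveTerm, if_neg hn, div_mul_eq_mul_div, norm_div]
  exact div_le_self (norm_nonneg _) (one_le_norm_two_pi_I_mul_intCast hn)

variable {coef}

lemma summable_fourierPrimitiveTerm {z : ℂ}
    (hsum : Summable fun n : ℤ ↦ coef n * cexp (2 * π * I * n * z)) :
    Summable fun n ↦ fourierPrimitiveTerm coef n z :=
  hsum.norm.of_norm_bounded_eventually <| by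
    filter_upwards [Filter.eventually_cofinite_ne 0] with n hn
    exact norm_fourierPrimitiveTerm_le coef hn z

lemma fourierPrimitive_add_one {z : ℂ}
    (hsum : Summable fun n : ℤ ↦ coef n * cexp (2 * π * I * n * z)) :
    fourierPrimitive coef (z + 1) = fourierPrimitive coef z + coef 0 := by
  have hterm : ∀ n, fourierPrimitiveTerm coef n (z + 1) =
      fourierPrimitiveTerm coef n z + (Pi.single 0 (coef 0) : ℤ → ℂ) n := by
    intro n
    rcases eq_or_ne n 0 with rfl | hn
    · simp [fourierPrimitiveTerm, mul_add]
    · simp [fourierPrimitiveTerm, hn, cexp_two_pi_I_mul_intCast_mul_add_one]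
  rw [fourierPrimitive, tsum_congr hterm,
    (summable_fourierPrimitiveTerm hsum).tsum_add (hasSum_pi_single 0 (coef 0)).summable,
    tsum_pi_single, fourierPrimitive]

lemma hasDerivAt_fourierPrimitive
    (hsum : ∀ z : ℂ, 0 < z.im → Summable fun n : ℤ ↦ coef n * cexp (2 * π * I * n * z))
    {z : ℂ} (hz : 0 < z.im) :
    HasDerivAt (fourierPrimitive coef) (∑' n : ℤ, coef n * cexp (2 * π * I * n * z)) z := by
  set a : ℂ := (z.im / 2 : ℝ) * I
  set b : ℂ := (z.im + 1 : ℝ) * I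
  have ha : a.im = z.im / 2 := by simp [a]
  have hb : b.im = z.im + 1 := by simp [b]
  have ha0 : 0 < a.im := by rw [ha]; linarith
  have hb0 : 0 < b.im := by rw [hb]; linarith
  have hzt : z ∈ {w : ℂ | a.im < w.im} ∩ {w | w.im < b.im} :=
    ⟨show a.im < z.im by rw [ha]; linarith, show z.im < b.im by rw [hb]; linarith⟩
  exact hasDerivAt_tsum_of_isPreconnected
    ((hsum a ha0).norm.add (hsum b hb0).norm)
    ((isOpen_lt continuous_const continuous_im).inter (isOpen_lt continuous_im continuous_const))
    ((convex_halfSpace_im_gt _).inter (convex_halfSpace_im_lt _)).isPreconnected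
    (fun n w _ ↦ hasDerivAt_fourierPrimitiveTerm coef n w)
    (fun n w hw ↦ norm_mul_cexp_two_pi_I_mul_le n hw.1.le hw.2.le) hzt
    (summable_fourierPrimitiveTerm (hsum z hz)) hzt

end FourierPrimitive

lemma neg_inv_im_pos {z : ℂ} (hz : 0 < z.im) : 0 < (-z⁻¹).im := by
  rw [neg_im, inv_im, neg_div, neg_neg]
  exact div_pos hz (normSq_pos.2 fun h ↦ by simp [h] at hz)

lemma apply_neg_inv_eq_of_hasDerivAt {F f : ℂ → ℂ}
    (hF : ∀ z : ℂ, 0 < z.im → HasDerivAt F (f z) z)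
    (hf : ∀ z : ℂ, 0 < z.im → f (-z⁻¹) = z ^ 2 * f z) {z : ℂ} (hz : 0 < z.im) :
    F (-z⁻¹) = F z := by
  have hH : ∀ w : ℂ, 0 < w.im → HasDerivAt (fun w ↦ F (-w⁻¹) - F w) 0 w := by
    intro w hw
    have hw0 : w ≠ 0 := fun h ↦ by simp [h] at hw
    have hinv : HasDerivAt (fun w ↦ -w⁻¹) (w ^ 2)⁻¹ w :=
      neg_neg (w ^ 2)⁻¹ ▸ (hasDerivAt_inv hw0).neg
    refine (((hF _ (neg_inv_im_pos hw)).comp w hinv).sub (hF w hw)).congr_deriv ?_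
    rw [hf w hw]
    field_simp
    ring
  have hconst := (isOpen_lt continuous_const continuous_im).is_const_of_deriv_eq_zero
    (convex_halfSpace_im_gt 0).isPreconnected
    (fun w hw ↦ (hH w hw).differentiableAt.differentiableWithinAt) (fun w hw ↦ (hH w hw).deriv)
    hz (show 0 < I.im by simp)
  simpa [sub_eq_zero] using hconst

lemma exists_im_pos_neg_inv_eq_add_one : ∃ ρ : ℂ, 0 < ρ.im ∧ -ρ⁻¹ = ρ + 1 := by
  have h3 : ((√3 : ℝ) : ℂ) ^ 2 = 3 := by
    rw [← ofReal_pow, Real.sq_sqrt (by norm_num)]; norm_num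
  refine ⟨-1 / 2 + (√3 / 2 : ℝ) * I, by simp, ?_⟩
  rw [neg_eq_iff_eq_neg, inv_eq_of_mul_eq_one_right]
  push_cast
  linear_combination (-I ^ 2 / 4) * h3 - (3 / 4 : ℂ) * I_sq

theorem weakly_holomorphic_weight_two_constant_term_general
    (f : ℂ → ℂ)
    (htrans : ∀ a b c d : ℤ, a * d - b * c = 1 → ∀ τ : ℂ, 0 < τ.im →
      f (((a : ℂ) * τ + b) / ((c : ℂ) * τ + d)) = ((c : ℂ) * τ + d) ^ 2 * f τ)
    (coef : ℤ → ℂ)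
    (hsum : ∀ τ : ℂ, 0 < τ.im →
      Summable (fun n : ℤ =>
        coef n * Complex.exp (2 * (Real.pi : ℂ) * Complex.I * (n : ℂ) * τ)))
    (hexp : ∀ τ : ℂ, 0 < τ.im →
      f τ = ∑' n : ℤ, coef n * Complex.exp (2 * (Real.pi : ℂ) * Complex.I * (n : ℂ) * τ)) :
    coef 0 = 0 := by
  have hS : ∀ z : ℂ, 0 < z.im → f (-z⁻¹) = z ^ 2 * f z := fun z hz ↦ by
    have h := htrans 0 (-1) 1 0 (by norm_num) z hz
    simp only [Int.cast_zero, Int.cast_one, Int.cast_neg, zero_mul, zero_add, one_mul,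
      add_zero] at h
    rwa [neg_div, one_div] at h
  have hF : ∀ z : ℂ, 0 < z.im → HasDerivAt (fourierPrimitive coef) (f z) z := fun z hz ↦ by
    simpa only [hexp z hz] using hasDerivAt_fourierPrimitive hsum hz
  obtain ⟨ρ, hρ, hρ_inv⟩ := exists_im_pos_neg_inv_eq_add_one
  have h := apply_neg_inv_eq_of_hasDerivAt hF hS hρ
  rw [hρ_inv, fourierPrimitive_add_one (hsum ρ hρ)] at h
  simpa using h.symm

/-- a nearly-holomorphic (weakly holomorphic) modular form of
weight 2 and level one has vanishing constant term. -/
theorem weakly_holomorphic_weight_two_constant_term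
    (f : ℂ → ℂ)
    (hol : DifferentiableOn ℂ f {τ : ℂ | 0 < τ.im})
    (htrans : ∀ a b c d : ℤ, a * d - b * c = 1 → ∀ τ : ℂ, 0 < τ.im →
      f (((a : ℂ) * τ + b) / ((c : ℂ) * τ + d)) = ((c : ℂ) * τ + d) ^ 2 * f τ)
    (N : ℕ) (coef : ℤ → ℂ)
    (hcut : ∀ n : ℤ, n < -(N : ℤ) → coef n = 0)
    (hsum : ∀ τ : ℂ, 0 < τ.im →
      Summable (fun n : ℤ =>
        coef n * Complex.exp (2 * (Real.pi : ℂ) * Complex.I * (n : ℂ) * τ)))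
    (hexp : ∀ τ : ℂ, 0 < τ.im →
      f τ = ∑' n : ℤ, coef n * Complex.exp (2 * (Real.pi : ℂ) * Complex.I * (n : ℂ) * τ)) :
    coef 0 = 0 :=
  weakly_holomorphic_weight_two_constant_term_general f htrans coef hsum hexp
end
end

section
/- Let Γ = SU_{2,2}(ℤ[i]) and let U_{2,2}(ℤ[i]) be the group of all M ∈ GL_4(ℂ) with entries in ℤ[i] satisfying Mᵀ 𝐉 M̄ = 𝐉. Set ℍ2 = {z ∈ H2 : zᵀ = z} (the Siegel upper half-space) and T = {z = [[τ, z1],[z2, w]] ∈ H2 : z1 = −z2}. Then: (a) there exists M ∈ U_{2,2}(ℤ[i]) with M·ℍ2 = T; and (b) there exists no γ ∈ Γ with γ·ℍ2 = T. (Thus ℍ2 and T represent two distinct Γ-orbits of discriminant-1/4 divisors, which coincide under the full Hermitian modular group U_{2,2}(ℤ[i]).) -/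
noncomputable section

open Matrix Complex

/-- Membership in the ring of Gaussian integers `ℤ[i] ⊆ ℂ`. -/
def InZi (x : ℂ) : Prop := ∃ a b : ℤ, x = (a : ℂ) + (b : ℂ) * Complex.I

/-- The full Hermitian modular group `U_{2,2}(ℤ[i])`. -/
def U22Zi : Set Mat4 := {M | (∀ i j, InZi (M i j)) ∧ IsUnitaryRel M}

/-- The group `SU_{2,2}(ℤ[i])`. -/
def SU22Zi : Set Mat4 := {M | M ∈ U22Zi ∧ M.det = 1}

/-!
Part (a): `diag(i, 1, i, 1)` lies in `U_{2,2}(ℤ[i])` (with determinant `-1`) and acts by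
`z ↦ a z a*`, `a = diag(i, 1)`, which preserves `H2` and turns `z₁ = z₂` into `z₁ = -z₂`.

Part (b): if `γ · ℍ₂ ⊆ T`, then for `w = γ · z` the matrix `ε w`, `ε = diag(1, -1)`, is symmetric.
Writing `A = az + b = wC`, `C = cz + d`, this says that the columns of `γ [z; 1]` span an
isotropic plane of the skew form `J_ε = [[0, -ε], [ε, 0]]`, for every `z ∈ ℍ₂`. The graphs of
symmetric `z` are the Lagrangian planes of `J`, so `γᵀ J_ε γ = ν J`. Pfaffians give
`-ν² = det γ · Pf J_ε = 1`, hence `ν = ±i`. Together with `γᵀ J γ̄ = J` this yields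
`J_ε γ = ν J γ̄`, so each row of `γ` lies in `ℤ (1 ± ν)`; then the entry `ν` of `γᵀ J_ε γ`
is a sum of products of two such elements, hence lies in `2νℤ`, which is absurd.
-/

open scoped ComplexOrder

namespace HermitianModular

lemma mem_HermHalf_iff {z : Mat2} :
    z ∈ HermHalf ↔ (((2 : ℂ) * I)⁻¹ • (z - zᴴ)).PosDef := by
  rw [posDef_iff_dotProduct_mulVec]
  refine and_congr_right fun hY => forall_congr' fun v => imp_congr_right fun _ => ?_
  have him : (star v ⬝ᵥ _ *ᵥ v).im = 0 := hY.im_star_dotProduct_mulVec_self v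
  rw [Complex.pos_iff, him]
  simp

lemma zero_notMem_HermHalf : (0 : Mat2) ∉ HermHalf := fun h => by
  simpa using (mem_HermHalf_iff.1 h).diag_pos (i := 0)

lemma mul_mul_conjTranspose_mem_HermHalf {U z : Mat2} (hU : IsUnit U) (hz : z ∈ HermHalf) :
    U * z * Uᴴ ∈ HermHalf := by
  rw [mem_HermHalf_iff] at hz ⊢
  have hconj : ((2 : ℂ) * I)⁻¹ • (U * z * Uᴴ - (U * z * Uᴴ)ᴴ)
      = U * (((2 : ℂ) * I)⁻¹ • (z - zᴴ)) * Uᴴ := by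
    simp only [conjTranspose_mul, conjTranspose_conjTranspose, Matrix.mul_smul,
      Matrix.smul_mul, Matrix.mul_sub, Matrix.sub_mul, Matrix.mul_assoc]
  rw [hconj]
  exact hz.mul_mul_conjTranspose_same (vecMul_injective_iff_isUnit.2 hU)

lemma imaginary_diag_mem_Siegel (t s x : ℝ) (ht : 0 < t) (hs : 0 < s) :
    !![(t : ℂ) * I, (x : ℂ); (x : ℂ), (s : ℂ) * I] ∈ Siegel := by
  refine ⟨mem_HermHalf_iff.2 ?_, ?_⟩
  · have hY : ((2 : ℂ) * I)⁻¹ • (!![(t : ℂ) * I, (x : ℂ); (x : ℂ), (s : ℂ) * I]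
        - !![(t : ℂ) * I, (x : ℂ); (x : ℂ), (s : ℂ) * I]ᴴ) = diagonal ![(t : ℂ), (s : ℂ)] := by
      ext i j
      fin_cases i <;> fin_cases j <;> field_simp <;> simp <;> ring_nf <;> simp [I_sq]
    rw [hY, posDef_diagonal_iff]
    intro i
    fin_cases i <;> simpa
  · ext i j
    fin_cases i <;> fin_cases j <;> rfl

def diagIOne : Mat2 := !![I, 0; 0, 1]

def diagIOneIOne : Mat4 := !![I, 0, 0, 0; 0, 1, 0, 0; 0, 0, I, 0; 0, 0, 0, 1]

lemma diagIOne_mul_conjTranspose : diagIOne * diagIOneᴴ = 1 := by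
  ext i j
  simp only [Matrix.mul_apply, Fin.sum_univ_two, conjTranspose_apply]
  fin_cases i <;> fin_cases j <;> simp [diagIOne]

lemma isUnit_diagIOne : IsUnit diagIOne :=
  IsUnit.of_mul_eq_one _ diagIOne_mul_conjTranspose

lemma isUnit_diagIOne_conjTranspose : IsUnit diagIOneᴴ :=
  IsUnit.of_mul_eq_one_right _ diagIOne_mul_conjTranspose

lemma diagIOneIOne_mem_U22Zi : diagIOneIOne ∈ U22Zi := by
  refine ⟨fun i j => ?_, ?_⟩
  · have h0 : InZi 0 := ⟨0, 0, by simp⟩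
    have h1 : InZi 1 := ⟨1, 0, by simp⟩
    have hI : InZi I := ⟨0, 1, by simp⟩
    fin_cases i <;> fin_cases j <;> simp [diagIOneIOne, h0, h1, hI]
  · ext i j
    fin_cases i <;> fin_cases j <;>
      simp [diagIOneIOne, Jmat, Matrix.mul_apply, Fin.sum_univ_four]

lemma moeb_diagIOneIOne (z : Mat2) : moeb diagIOneIOne z = diagIOne * z * diagIOneᴴ := by
  have h00 : blk diagIOneIOne 0 0 = diagIOne := by ext i j; fin_cases i <;> fin_cases j <;> rfl
  have h01 : blk diagIOneIOne 0 1 = 0 := by ext i j; fin_cases i <;> fin_cases j <;> rfl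
  have h10 : blk diagIOneIOne 1 0 = 0 := by ext i j; fin_cases i <;> fin_cases j <;> rfl
  have h11 : blk diagIOneIOne 1 1 = diagIOne := by ext i j; fin_cases i <;> fin_cases j <;> rfl
  rw [moeb, h00, h01, h10, h11, Matrix.zero_mul, zero_add, add_zero,
    Matrix.inv_eq_right_inv diagIOne_mul_conjTranspose]

lemma image_moeb_diagIOneIOne_Siegel :
    moeb diagIOneIOne '' Siegel = {z : Mat2 | z ∈ HermHalf ∧ z 0 1 = - z 1 0} := by
  have hentries : ∀ z : Mat2,
      diagIOne * z * diagIOneᴴ = !![z 0 0, I * z 0 1; -I * z 1 0, z 1 1] := by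
    intro z
    ext i j
    simp only [Matrix.mul_apply, Fin.sum_univ_two, conjTranspose_apply]
    fin_cases i <;> fin_cases j <;> simp [diagIOne, mul_comm, ← mul_assoc]
  ext w
  simp only [Set.mem_image, moeb_diagIOneIOne, Set.mem_ofPred_eq]
  constructor
  · rintro ⟨z, ⟨hz, hsymm⟩, rfl⟩
    refine ⟨mul_mul_conjTranspose_mem_HermHalf isUnit_diagIOne hz, ?_⟩
    have h10 : z 1 0 = z 0 1 := congrFun (congrFun hsymm 0) 1
    simp [hentries, h10]
  · rintro ⟨hw, hskew⟩
    refine ⟨diagIOneᴴ * w * diagIOne, ⟨?_, ?_⟩, ?_⟩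
    · simpa using mul_mul_conjTranspose_mem_HermHalf isUnit_diagIOne_conjTranspose hw
    · ext i j
      simp only [Matrix.mul_apply, Fin.sum_univ_two, conjTranspose_apply, transpose_apply]
      fin_cases i <;> fin_cases j <;> simp [diagIOne, hskew, mul_comm]
    · simp only [← Matrix.mul_assoc, diagIOne_mul_conjTranspose, Matrix.one_mul]
      rw [Matrix.mul_assoc, diagIOne_mul_conjTranspose, Matrix.mul_one]

def skewEntry (X : Mat2) : ℂ := X 0 1 - X 1 0

lemma skewEntry_transpose_mul_mul (C X : Mat2) :
    skewEntry (Cᵀ * X * C) = C.det * skewEntry X := by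
  simp [skewEntry, Matrix.mul_apply, Matrix.det_fin_two, Fin.sum_univ_two]
  ring

def epsMat : Mat2 := !![1, 0; 0, -1]

def Jeps : Mat4 := !![0, 0, -1, 0; 0, 0, 0, 1; 1, 0, 0, 0; 0, -1, 0, 0]

def graph (z : Mat2) : Matrix (Fin 4) (Fin 2) ℂ := !![z 0 0, z 0 1; z 1 0, z 1 1; 1, 0; 0, 1]

lemma graph_form_eq_skewEntry (γ : Mat4) (z : Mat2) :
    ((graph z)ᵀ * (γᵀ * Jeps * γ) * graph z) 0 1 =
      skewEntry ((blk γ 1 0 * z + blk γ 1 1)ᵀ * epsMat * (blk γ 0 0 * z + blk γ 0 1)) := by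
  simp [skewEntry, graph, Jeps, epsMat, blk, Matrix.mul_apply, Fin.sum_univ_four,
    Fin.sum_univ_two]
  ring

lemma graph_form_eq_zero_of_image_subset {γ : Mat4}
    (hγ : moeb γ '' Siegel ⊆ {z : Mat2 | z ∈ HermHalf ∧ z 0 1 = - z 1 0})
    {z : Mat2} (hz : z ∈ Siegel) :
    ((graph z)ᵀ * (γᵀ * Jeps * γ) * graph z) 0 1 = 0 := by
  obtain ⟨hw, hskew⟩ := hγ (Set.mem_image_of_mem _ hz)
  rw [graph_form_eq_skewEntry]
  set C := blk γ 1 0 * z + blk γ 1 1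
  set A := blk γ 0 0 * z + blk γ 0 1
  have hC : IsUnit C.det := by
    -- for singular `C` the junk inverse makes `moeb γ z = 0`
    by_contra hC
    refine zero_notMem_HermHalf ?_
    rwa [moeb, Matrix.nonsing_inv_apply_not_isUnit C hC, Matrix.mul_zero] at hw
  have hA : A = moeb γ z * C := by
    rw [moeb, Matrix.mul_assoc, Matrix.nonsing_inv_mul C hC, Matrix.mul_one]
  rw [hA, ← Matrix.mul_assoc, Matrix.mul_assoc _ epsMat, skewEntry_transpose_mul_mul]
  simp [skewEntry, epsMat, Matrix.mul_apply, Fin.sum_univ_two, hskew]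

lemma graph_form_apply {S : Mat4} (hS : Sᵀ = -S) (τ w x : ℂ) :
    ((graph !![τ, x; x, w])ᵀ * S * graph !![τ, x; x, w]) 0 1 =
      S 0 1 * (τ * w - x ^ 2) + S 0 3 * τ + S 2 1 * w + (S 1 3 + S 2 0) * x + S 2 3 := by
  have h : ∀ i j, S j i = - S i j := fun i j => by simpa using congrFun (congrFun hS i) j
  have h00 : S 0 0 = 0 := by linear_combination h 0 0 / 2
  have h11 : S 1 1 = 0 := by linear_combination h 1 1 / 2
  simp [graph, Matrix.mul_apply, Fin.sum_univ_four, h 0 1, h00, h11]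
  ring

lemma eq_smul_Jmat_of_graph_form_eq_zero {S : Mat4} (hS : Sᵀ = -S)
    (hiso : ∀ z ∈ Siegel, ((graph z)ᵀ * S * graph z) 0 1 = 0) :
    S = S 2 0 • Jmat := by
  have hpt : ∀ t s x : ℝ, 0 < t → 0 < s →
      S 0 1 * (-(t * s) - x ^ 2) + S 0 3 * (t * I) + S 2 1 * (s * I)
        + (S 1 3 + S 2 0) * x + S 2 3 = 0 := fun t s x ht hs => by
    have h := hiso _ (imaginary_diag_mem_Siegel t s x ht hs)
    rw [graph_form_apply hS] at h
    linear_combination h - S 0 1 * t * s * I_sq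
  have E1 := hpt 1 1 0 one_pos one_pos
  have E2 := hpt 2 1 0 two_pos one_pos
  have E3 := hpt 1 2 0 one_pos two_pos
  have E4 := hpt 2 2 0 two_pos two_pos
  have E5 := hpt 1 1 1 one_pos one_pos
  push_cast at E1 E2 E3 E4 E5
  -- bilinear interpolation in `τ, w ∈ {i, 2i}`, then the linear term in `x`
  have h01 : S 0 1 = 0 := by linear_combination -(E1 - E2 - E3 + E4)
  have h03 : S 0 3 = 0 := (mul_eq_zero.1 (by linear_combination E2 - E1 + h01 :
    I * S 0 3 = 0)).resolve_left I_ne_zero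
  have h21 : S 2 1 = 0 := (mul_eq_zero.1 (by linear_combination E3 - E1 + h01 :
    I * S 2 1 = 0)).resolve_left I_ne_zero
  have h23 : S 2 3 = 0 := by linear_combination E1 + h01 - I * h03 - I * h21
  have h13 : S 1 3 = - S 2 0 := by linear_combination E5 - E1 + h01
  have h : ∀ i j, S j i = - S i j := fun i j => by simpa using congrFun (congrFun hS i) j
  have hd : ∀ i, S i i = 0 := fun i => by linear_combination h i i / 2
  ext i j
  fin_cases i <;> fin_cases j <;>
    simp [Jmat, hd, h01, h03, h21, h23, h13, h 0 1, h 0 2, h 0 3, h 2 1, h 1 3, h 2 3]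

def pfaffian4 (S : Mat4) : ℂ := S 0 1 * S 2 3 - S 0 2 * S 1 3 + S 0 3 * S 1 2

lemma pfaffian4_transpose_mul_mul (A S : Mat4) (hS : Sᵀ = -S) :
    pfaffian4 (Aᵀ * S * A) = A.det * pfaffian4 S := by
  have h : ∀ i j, S j i = - S i j := fun i j => by simpa using congrFun (congrFun hS i) j
  have hd : ∀ i, S i i = 0 := fun i => by linear_combination h i i / 2
  rw [Matrix.det_succ_row_zero]
  simp [pfaffian4, Matrix.mul_apply, Fin.sum_univ_four, Matrix.det_fin_three, Matrix.submatrix,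
    Fin.succAbove, h 1 0, h 2 0, h 3 0, h 2 1, h 3 1, h 3 2, hd]
  ring

lemma Jeps_transpose : Jepsᵀ = -Jeps := by
  ext i j
  fin_cases i <;> fin_cases j <;> simp [Jeps]

lemma transpose_mul_Jeps_mul_eq_smul_Jmat {γ : Mat4}
    (hγ : moeb γ '' Siegel ⊆ {z : Mat2 | z ∈ HermHalf ∧ z 0 1 = - z 1 0}) :
    γᵀ * Jeps * γ = (γᵀ * Jeps * γ) 2 0 • Jmat := by
  refine eq_smul_Jmat_of_graph_form_eq_zero ?_ fun _ => graph_form_eq_zero_of_image_subset hγ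
  simp [Matrix.transpose_mul, Jeps_transpose, Matrix.mul_assoc]

lemma sq_eq_neg_one_of_det_eq_one {γ : Mat4} {ν : ℂ} (hdet : γ.det = 1)
    (hν : γᵀ * Jeps * γ = ν • Jmat) : ν ^ 2 = -1 := by
  have h := pfaffian4_transpose_mul_mul γ Jeps Jeps_transpose
  rw [hν, hdet] at h
  simp [pfaffian4, Jmat, Jeps] at h
  linear_combination -h

lemma Jeps_mul_eq_smul_Jmat_mul_map_conj {γ : Mat4} {ν : ℂ} (hU : IsUnitaryRel γ)
    (hdet : IsUnit γ.det) (hν : γᵀ * Jeps * γ = ν • Jmat) :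
    Jeps * γ = ν • (Jmat * γ.map (starRingEnd ℂ)) := by
  refine ((Matrix.isUnit_iff_isUnit_det _).2 (by rwa [det_transpose])).mul_left_cancel ?_
  rw [← Matrix.mul_assoc, hν, Matrix.mul_smul, ← Matrix.mul_assoc, hU]

lemma eq_or_eq_neg_I_of_sq_eq_neg_one {μ : ℂ} (hμ : μ ^ 2 = -1) : μ = I ∨ μ = -I := by
  have h : (μ - I) * (μ + I) = 0 := by linear_combination hμ - I_sq
  rcases mul_eq_zero.1 h with h | h
  · exact Or.inl (by linear_combination h)
  · exact Or.inr (by linear_combination h)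

lemma exists_int_eq_mul_one_add_of_eq_mul_conj {g μ : ℂ} (hg : InZi g) (hμ : μ ^ 2 = -1)
    (h : g = μ * starRingEnd ℂ g) : ∃ a : ℤ, g = a * (1 + μ) := by
  obtain ⟨a, b, rfl⟩ := hg
  have hc : starRingEnd ℂ (a + b * I) = a - b * I := by simp [Complex.conj_I]; ring
  rw [hc] at h
  rcases eq_or_eq_neg_I_of_sq_eq_neg_one hμ with rfl | rfl
  · obtain rfl : a = b := by simpa using congrArg re h
    exact ⟨a, by ring⟩
  · obtain rfl : a = -b := by exact_mod_cast (by simpa using congrArg re h : (a : ℝ) = -b)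
    exact ⟨-b, by push_cast; ring⟩

lemma apply_eq_mul_conj_of_Jeps_mul_eq {γ : Mat4} {ν : ℂ}
    (hrel : Jeps * γ = ν • (Jmat * γ.map (starRingEnd ℂ))) (i k : Fin 4) :
    γ i k = ![ν, -ν, ν, -ν] i * starRingEnd ℂ (γ i k) := by
  have hrow : ∀ j, (Jeps * γ) j k = ν * (Jmat * γ.map (starRingEnd ℂ)) j k := fun j => by
    rw [hrel, Matrix.smul_apply, smul_eq_mul]
  fin_cases i
  · simpa [Jeps, Jmat, Matrix.mul_apply, Fin.sum_univ_four] using hrow 2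
  · simpa [Jeps, Jmat, Matrix.mul_apply, Fin.sum_univ_four, neg_eq_iff_eq_neg] using hrow 3
  · simpa [Jeps, Jmat, Matrix.mul_apply, Fin.sum_univ_four] using hrow 0
  · simpa [Jeps, Jmat, Matrix.mul_apply, Fin.sum_univ_four] using hrow 1

lemma exists_int_transpose_mul_Jeps_mul_apply_eq {γ : Mat4} {ν : ℂ} (hZi : ∀ i j, InZi (γ i j))
    (hν : ν ^ 2 = -1) (hrel : Jeps * γ = ν • (Jmat * γ.map (starRingEnd ℂ))) :
    ∃ n : ℤ, (γᵀ * Jeps * γ) 2 0 = 2 * ν * n := by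
  have hsq : ∀ i, (![ν, -ν, ν, -ν] i) ^ 2 = -1 := fun i => by fin_cases i <;> simp [hν]
  choose x hx using fun i k => exists_int_eq_mul_one_add_of_eq_mul_conj (hZi i k) (hsq i)
    (apply_eq_mul_conj_of_Jeps_mul_eq hrel i k)
  refine ⟨x 2 2 * x 0 0 - x 0 2 * x 2 0 - (x 1 2 * x 3 0 - x 3 2 * x 1 0), ?_⟩
  simp [Jeps, Matrix.mul_apply, Fin.sum_univ_four, hx]
  linear_combination (x 2 2 * x 0 0 - x 0 2 * x 2 0 + (x 1 2 * x 3 0 - x 3 2 * x 1 0)) * hν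

theorem not_image_Siegel_subset_of_mem_SU22Zi {γ : Mat4} (hγ : γ ∈ SU22Zi) :
    ¬ moeb γ '' Siegel ⊆ {z : Mat2 | z ∈ HermHalf ∧ z 0 1 = - z 1 0} := by
  obtain ⟨⟨hZi, hU⟩, hdet⟩ := hγ
  intro himg
  set ν := (γᵀ * Jeps * γ) 2 0
  have hS : γᵀ * Jeps * γ = ν • Jmat := transpose_mul_Jeps_mul_eq_smul_Jmat himg
  have hν : ν ^ 2 = -1 := sq_eq_neg_one_of_det_eq_one hdet hS
  obtain ⟨n, hn⟩ := exists_int_transpose_mul_Jeps_mul_apply_eq hZi hν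
    (Jeps_mul_eq_smul_Jmat_mul_map_conj hU (by rw [hdet]; exact isUnit_one) hS)
  -- `ν = 2νn` with `ν ≠ 0` would make `1` even
  have h : ν * ((1 - 2 * n : ℤ) : ℂ) = 0 := by push_cast; linear_combination hn
  rcases mul_eq_zero.1 h with h | h
  · simp [h] at hν
  · have : 1 - 2 * n = 0 := by exact_mod_cast h
    omega

end HermitianModular

/-- the Siegel upper half-space `ℍ₂` and
`T = {z ∈ H2 : z₁ = -z₂}` lie in the same orbit under `U_{2,2}(ℤ[i])` but in
distinct orbits under `SU_{2,2}(ℤ[i])`. -/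
theorem two_orbits_of_discriminant_quarter_divisors :
    (∃ M ∈ U22Zi, moeb M '' Siegel = {z : Mat2 | z ∈ HermHalf ∧ z 0 1 = - z 1 0}) ∧
    ¬ ∃ γ ∈ SU22Zi, moeb γ '' Siegel = {z : Mat2 | z ∈ HermHalf ∧ z 0 1 = - z 1 0} :=
  ⟨⟨HermitianModular.diagIOneIOne, HermitianModular.diagIOneIOne_mem_U22Zi,
      HermitianModular.image_moeb_diagIOneIOne_Siegel⟩,
    fun ⟨_, hγ, himg⟩ => HermitianModular.not_image_Siegel_subset_of_mem_SU22Zi hγ himg.subset⟩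
end
end
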